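/- For τ in the upper half plane and q = e^{2πiτ}, the two evaluations R(−τ−1/2; 2τ) = i q^{1/4} and R(−τ−1; 2τ) = −q^{1/4} hold, where R(u;τ) = ∑_{ν ∈ 1/2+ℤ} (sgn(ν) − E((ν + Im(u)/Im(τ))·√(2 Im τ))) · (−1)^{ν−1/2} e^{−πiν²τ} e^{−2πiνu}. -/

import Mathlib

/-! At `u = -τ - m/2` and modulus `2τ` one has `Im u / Im (2τ) = -1/2`, so the half-integer
shift `ν = n + 1/2` cancels inside `E` and the summand of `R` becomes
`I^m q^{1/4} c(n) (-1)^{(m+1)n} e^{-2πi n² τ}` with `c(n) = sgn(n + 1/2) - E(n √(4 Im τ))`.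
As `E` is odd, `c(-n) = -c(n)` for `n ≠ 0` while `c(0) = 1`; and the Gaussian tail bound
`1 - E(t) ≤ 2 e^{-πt²}` beats the growth of `e^{-2πi n² τ}`, so the series converges absolutely
and collapses to its `n = 0` term `I^m q^{1/4}`. -/

open scoped BigOperators

/-- `E(t) = 2∫₀ᵗ e^{−πu²} du`. -/
noncomputable def Efun (t : ℝ) : ℝ := 2 * ∫ u in (0:ℝ)..t, Real.exp (-Real.pi * u ^ 2)

/-- Zwegers' function
`R(u;τ) = ∑_{ν ∈ 1/2+ℤ} (sgn(ν) − E((ν + Im u / Im τ)√(2 Im τ)))(−1)^{ν−1/2} e^{−πiν²τ} e^{−2πiνu}`,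
indexed by `ν = n + 1/2`, `n ∈ ℤ`. -/
noncomputable def Rfun (u τ : ℂ) : ℂ :=
  ∑' n : ℤ,
    ((Real.sign ((n : ℝ) + 1/2)
        - Efun (((n : ℝ) + 1/2 + u.im / τ.im) * Real.sqrt (2 * τ.im)) : ℝ) : ℂ)
      * (-1 : ℂ) ^ n
      * Complex.exp (-Real.pi * Complex.I * ((n : ℂ) + 1/2) ^ 2 * τ)
      * Complex.exp (-2 * Real.pi * Complex.I * ((n : ℂ) + 1/2) * u)

open MeasureTheory Real Set

lemma Efun_zero : Efun 0 = 0 := by simp [Efun]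

lemma Efun_neg (t : ℝ) : Efun (-t) = -Efun t := by
  have h := intervalIntegral.integral_comp_neg (a := 0) (b := t) fun u ↦ rexp (-π * u ^ 2)
  simp only [neg_sq, neg_zero] at h
  rw [Efun, Efun, intervalIntegral.integral_symm, ← h, mul_neg]

lemma one_sub_Efun (t : ℝ) : 1 - Efun t = 2 * ∫ x in Ioi t, rexp (-π * x ^ 2) := by
  have hint : Integrable fun x : ℝ ↦ rexp (-π * x ^ 2) := integrable_exp_neg_mul_sq pi_pos
  have hsplit := intervalIntegral.integral_interval_add_Ioi (a := 0) (b := t)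
    hint.integrableOn hint.integrableOn
  rw [integral_gaussian_Ioi, div_self pi_pos.ne', sqrt_one] at hsplit
  rw [Efun]
  linarith

lemma Efun_le_one (t : ℝ) : Efun t ≤ 1 := by
  have := setIntegral_nonneg (μ := volume) measurableSet_Ioi
    fun x (_ : x ∈ Ioi t) ↦ (exp_pos (-π * x ^ 2)).le
  linarith [one_sub_Efun t]

lemma one_sub_Efun_le {t : ℝ} (ht : 0 ≤ t) : 1 - Efun t ≤ 2 * rexp (-π * t ^ 2) := by
  have hshift : Integrable fun x : ℝ ↦ rexp (-π * (x - t) ^ 2) :=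
    (integrable_exp_neg_mul_sq pi_pos).comp_sub_right t
  have hpoint : ∀ x ∈ Ioi t,
      rexp (-π * x ^ 2) ≤ rexp (-π * t ^ 2) * rexp (-π * (x - t) ^ 2) := by
    intro x hx
    rw [← exp_add, exp_le_exp]
    -- `x² ≥ t² + (x - t)²` for `x ≥ t ≥ 0`
    nlinarith [mul_nonneg (mul_nonneg pi_pos.le ht) (sub_nonneg.2 (le_of_lt hx))]
  calc 1 - Efun t = 2 * ∫ x in Ioi t, rexp (-π * x ^ 2) := one_sub_Efun t
    _ ≤ 2 * ∫ x in Ioi t, rexp (-π * t ^ 2) * rexp (-π * (x - t) ^ 2) := by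
      refine mul_le_mul_of_nonneg_left ?_ zero_le_two
      exact setIntegral_mono_on (integrable_exp_neg_mul_sq pi_pos).integrableOn
        (hshift.const_mul _).integrableOn measurableSet_Ioi hpoint
    _ = 2 * rexp (-π * t ^ 2) * ∫ x in Ioi t, rexp (-π * (x - t) ^ 2) := by
      rw [integral_const_mul, mul_assoc]
    _ ≤ 2 * rexp (-π * t ^ 2) * ∫ x, rexp (-π * (x - t) ^ 2) := by
      refine mul_le_mul_of_nonneg_left ?_ (by positivity)
      exact setIntegral_le_integral hshift (.of_forall fun x ↦ (exp_pos _).le)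
    _ = 2 * rexp (-π * t ^ 2) := by
      rw [integral_sub_right_eq_self (fun x ↦ rexp (-π * x ^ 2)), integral_gaussian,
        div_self pi_pos.ne', sqrt_one, mul_one]

theorem Function.Odd.tsum_eq_zero {α β : Type*} [InvolutiveNeg α] [AddCommGroup β]
    [TopologicalSpace β] [IsTopologicalAddGroup β] [T2Space β] [IsAddTorsionFree β]
    {f : α → β} (hf : f.Odd) : ∑' a, f a = 0 := by
  simpa [funext hf, tsum_neg, neg_eq_self] using (Equiv.neg α).tsum_eq f

theorem tsum_int_eq_apply_zero_of_odd {β : Type*} [AddCommGroup β]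
    [TopologicalSpace β] [IsTopologicalAddGroup β] [T2Space β] [IsAddTorsionFree β]
    {f : ℤ → β} (hf : Summable f) (hodd : ∀ n ≠ 0, f (-n) = -f n) : ∑' n, f n = f 0 := by
  have hodd' : Function.Odd fun n ↦ if n = 0 then 0 else f n := by
    intro n
    by_cases hn : n = 0
    · simp [hn]
    · simp [hn, hodd n hn]
  rw [hf.tsum_eq_add_tsum_ite 0, hodd'.tsum_eq_zero, add_zero]

noncomputable def Rcoeff (s : ℝ) (n : ℤ) : ℝ := Real.sign ((n : ℝ) + 1/2) - Efun (n * s)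

lemma Rcoeff_zero (s : ℝ) : Rcoeff s 0 = 1 := by
  rw [Rcoeff, Int.cast_zero, zero_mul, zero_add, Efun_zero, Real.sign_of_pos one_half_pos,
    sub_zero]

lemma Rcoeff_neg (s : ℝ) {n : ℤ} (hn : n ≠ 0) : Rcoeff s (-n) = -Rcoeff s n := by
  have hsign : Real.sign (-(n : ℝ) + 1/2) = -Real.sign ((n : ℝ) + 1/2) := by
    rcases hn.lt_or_gt with h | h
    · have h1 : (n : ℝ) ≤ -1 := by exact_mod_cast Int.le_sub_one_of_lt h
      rw [Real.sign_of_pos (by linarith), Real.sign_of_neg (by linarith), neg_neg]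
    · have h1 : (1 : ℝ) ≤ n := by exact_mod_cast h
      rw [Real.sign_of_neg (by linarith), Real.sign_of_pos (by linarith)]
  simp only [Rcoeff, Int.cast_neg, hsign, neg_mul, Efun_neg]
  ring

lemma abs_Rcoeff_le {s : ℝ} (hs : 0 ≤ s) (n : ℤ) :
    |Rcoeff s n| ≤ 2 * rexp (-π * s ^ 2 * n ^ 2) := by
  have hpos : ∀ n : ℤ, 0 < n → |Rcoeff s n| ≤ 2 * rexp (-π * s ^ 2 * n ^ 2) := by
    intro n hn
    have h1 : (1 : ℝ) ≤ n := by exact_mod_cast hn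
    have hns : 0 ≤ (n : ℝ) * s := by positivity
    rw [Rcoeff, Real.sign_of_pos (by linarith), abs_of_nonneg (sub_nonneg.2 (Efun_le_one _))]
    convert one_sub_Efun_le hns using 3
    ring
  rcases lt_trichotomy n 0 with h | rfl | h
  · simpa [Rcoeff_neg s h.ne] using hpos (-n) (by omega)
  · simp [Rcoeff_zero]
  · exact hpos n h

lemma summable_int_exp_neg_mul_sq {a : ℝ} (ha : 0 < a) :
    Summable fun n : ℤ ↦ rexp (-a * n ^ 2) := by
  simpa [mul_div_cancel₀ _ pi_pos.ne', ← mul_assoc] using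
    summable_pow_mul_jacobiTheta₂_term_bound 0 (div_pos ha pi_pos) 0

open Complex

lemma norm_cexp_neg_two_pi_I_mul_sq (τ : ℂ) (n : ℤ) :
    ‖cexp (-2 * π * I * n ^ 2 * τ)‖ = rexp (2 * π * τ.im * n ^ 2) := by
  have hexp : -2 * π * I * n ^ 2 * τ = ((-2 * π * n ^ 2 : ℝ) : ℂ) * (I * τ) := by
    push_cast
    ring
  rw [norm_exp, hexp, re_ofReal_mul, I_mul_re]
  ring_nf

theorem summable_Rcoeff_mul {τ : ℂ} (hτ : 0 < τ.im) {ε : ℤ → ℂ} (hε : ∀ n, ‖ε n‖ ≤ 1) :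
    Summable fun n : ℤ ↦ (Rcoeff √(4 * τ.im) n : ℂ) * ε n * cexp (-2 * π * I * n ^ 2 * τ) := by
  have hmaj := (summable_int_exp_neg_mul_sq (by positivity : 0 < 2 * π * τ.im)).mul_left 2
  refine hmaj.of_norm_bounded fun n ↦ ?_
  have hc := abs_Rcoeff_le (sqrt_nonneg (4 * τ.im)) n
  rw [sq_sqrt (by positivity)] at hc
  rw [norm_mul, norm_mul, norm_real, Real.norm_eq_abs, norm_cexp_neg_two_pi_I_mul_sq]
  calc |Rcoeff √(4 * τ.im) n| * ‖ε n‖ * rexp (2 * π * τ.im * n ^ 2)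
      ≤ 2 * rexp (-π * (4 * τ.im) * n ^ 2) * 1 * rexp (2 * π * τ.im * n ^ 2) := by
        gcongr
        exact hε n
    _ = 2 * rexp (-(2 * π * τ.im) * n ^ 2) := by
        rw [mul_one, mul_assoc, ← Real.exp_add]
        ring_nf

theorem tsum_Rcoeff_mul {τ : ℂ} (hτ : 0 < τ.im) {ε : ℤ → ℂ} (heven : ε.Even)
    (hε : ∀ n, ‖ε n‖ ≤ 1) :
    ∑' n : ℤ, (Rcoeff √(4 * τ.im) n : ℂ) * ε n * cexp (-2 * π * I * n ^ 2 * τ) = ε 0 := by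
  rw [tsum_int_eq_apply_zero_of_odd (summable_Rcoeff_mul hτ hε) fun n hn ↦ ?_]
  · simp [Rcoeff_zero]
  · rw [Rcoeff_neg _ hn, heven n, Int.cast_neg, neg_sq, ofReal_neg]
    ring

noncomputable def Rterm (u τ : ℂ) (n : ℤ) : ℂ :=
  ((Real.sign ((n : ℝ) + 1/2) - Efun (((n : ℝ) + 1/2 + u.im / τ.im) * √(2 * τ.im)) : ℝ) : ℂ)
    * (-1 : ℂ) ^ n * cexp (-π * I * ((n : ℂ) + 1/2) ^ 2 * τ)
    * cexp (-2 * π * I * ((n : ℂ) + 1/2) * u)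

lemma Rfun_eq_tsum_Rterm (u τ : ℂ) : Rfun u τ = ∑' n, Rterm u τ n := rfl

lemma Rterm_neg_sub_half_int {τ : ℂ} (hτ : τ.im ≠ 0) (m n : ℤ) :
    Rterm (-τ - m / 2) (2 * τ) n = I ^ m * cexp (π * I * τ / 2) *
      ((Rcoeff √(4 * τ.im) n : ℂ) * (-1) ^ ((m + 1) * n) * cexp (-2 * π * I * n ^ 2 * τ)) := by
  have harg : ((n : ℝ) + 1/2 + (-τ - m / 2).im / (2 * τ).im) * √(2 * (2 * τ).im)
      = n * √(4 * τ.im) := by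
    have hu : (-τ - m / 2).im = -τ.im := by simp
    have h2 : (2 * τ).im = 2 * τ.im := by simp
    rw [hu, h2, show 2 * (2 * τ.im) = 4 * τ.im by ring]
    congr 1
    field_simp
    ring
  have hphase : (-1 : ℂ) ^ n * cexp (-π * I * (n + 1/2) ^ 2 * (2 * τ))
        * cexp (-2 * π * I * (n + 1/2) * (-τ - m / 2))
      = I ^ m * cexp (π * I * τ / 2) * (-1) ^ ((m + 1) * n)
          * cexp (-2 * π * I * n ^ 2 * τ) := by
    have hI : I ^ m = cexp (m * (π / 2 * I)) := by rw [exp_int_mul, exp_pi_div_two_mul_I]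
    have hneg : ∀ k : ℤ, (-1 : ℂ) ^ k = cexp (k * (π * I)) := fun k ↦ by
      rw [exp_int_mul, exp_pi_mul_I]
    rw [hI, hneg, hneg]
    simp only [← Complex.exp_add]
    congr 1
    push_cast
    ring
  rw [Rterm, harg, mul_assoc _ (_ ^ n), mul_assoc, hphase, Rcoeff]
  ring

theorem Rfun_neg_sub_half_int {τ : ℂ} (hτ : 0 < τ.im) (m : ℤ) :
    Rfun (-τ - m / 2) (2 * τ) = I ^ m * cexp (π * I * τ / 2) := by
  have heven : Function.Even fun n : ℤ ↦ (-1 : ℂ) ^ ((m + 1) * n) := fun n ↦ by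
    dsimp only
    rw [mul_neg, zpow_neg, ← inv_zpow, inv_neg, inv_one]
  rw [Rfun_eq_tsum_Rterm, tsum_congr (Rterm_neg_sub_half_int hτ.ne' m), tsum_mul_left,
    tsum_Rcoeff_mul hτ heven fun n ↦ by simp [norm_zpow], mul_zero, zpow_zero, mul_one]

/-- With `q^{1/4} = e^{πiτ/2}`: `R(−τ−1/2; 2τ) = i q^{1/4}` and `R(−τ−1; 2τ) = −q^{1/4}`. -/
theorem Rfun_special_values (τ : ℂ) (hτ : 0 < τ.im) :
    Rfun (-τ - 1/2) (2 * τ) = Complex.I * Complex.exp (Real.pi * Complex.I * τ / 2) ∧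
    Rfun (-τ - 1) (2 * τ) = -Complex.exp (Real.pi * Complex.I * τ / 2) := by
  constructor
  · simpa using Rfun_neg_sub_half_int hτ 1
  · simpa using Rfun_neg_sub_half_int hτ 2
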